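/- Let I_1, …, I_l ⊆ {1,…,m} be index sets and let x ∈ Row(A). If the composed projections preserve the norm of x, i.e. ‖P_{I_l}(⋯(P_{I_1} x)⋯)‖ = ‖x‖, then x is orthogonal to v_h for every h ∈ I_1 ∪ ⋯ ∪ I_l; consequently each partial composition fixes x, i.e. P_{I_s}(⋯(P_{I_1} x)⋯) = x for every 1 ≤ s ≤ l. -/

import Mathlib

/-!
Each `P_I` is an orthogonal projection, so it does not increase norms, and by Pythagoras
`‖P_I y‖ = ‖y‖` forces `P_I y = y`. If the composition preserves `‖x‖`, then already
`‖P_{I_1} x‖ = ‖x‖`, so `P_{I_1}` fixes `x` and the remaining composition preserves `‖x‖`;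
by induction every `P_{I_t}` fixes `x`, i.e. `x ⟂ v_h` for all `h ∈ I_t`.
-/

open scoped RealInnerProductSpace

/-- The orthogonal projection of `E` onto the orthogonal complement of
`span {v h : h ∈ I}`, i.e. the projection `I - A_I† A_I` onto the null space of the
row block `A_I` of the matrix `A` whose rows are the vectors `v h`. -/
noncomputable def projPerp {E : Type*} [NormedAddCommGroup E] [InnerProductSpace ℝ E]
    [FiniteDimensional ℝ E] {m : ℕ} (v : Fin m → E) (I : Set (Fin m)) (x : E) : E :=
  (Submodule.orthogonalProjectionOnto (Submodule.span ℝ (v '' I))ᗮ x : E)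

theorem foldl_apply_eq_self {α : Type*} (L : List (α → α)) (x : α) (hL : ∀ f ∈ L, f x = x) :
    L.foldl (fun y f => f y) x = x := by
  induction L with
  | nil => rfl
  | cons f L ih =>
    rw [List.foldl_cons, hL f List.mem_cons_self]
    exact ih fun g hg => hL g (List.mem_cons_of_mem f hg)

section Foldl

variable {E : Type*} [Norm E]

theorem norm_foldl_apply_le (L : List (E → E)) (hL : ∀ f ∈ L, ∀ y, ‖f y‖ ≤ ‖y‖) (x : E) :
    ‖L.foldl (fun y f => f y) x‖ ≤ ‖x‖ := by
  induction L generalizing x with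
  | nil => exact le_rfl
  | cons f L ih =>
    exact (ih (fun g hg => hL g (List.mem_cons_of_mem f hg)) (f x)).trans
      (hL f List.mem_cons_self x)

theorem forall_apply_eq_self_of_norm_foldl_apply_eq (L : List (E → E))
    (hle : ∀ f ∈ L, ∀ y, ‖f y‖ ≤ ‖y‖) (hfix : ∀ f ∈ L, ∀ y, ‖f y‖ = ‖y‖ → f y = y) (x : E)
    (hnorm : ‖L.foldl (fun y f => f y) x‖ = ‖x‖) : ∀ f ∈ L, f x = x := by
  induction L with
  | nil => simp
  | cons f L ih =>
    have hle' : ∀ g ∈ L, ∀ y, ‖g y‖ ≤ ‖y‖ := fun g hg => hle g (List.mem_cons_of_mem f hg)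
    rw [List.foldl_cons] at hnorm
    have hfx : f x = x := by
      refine hfix f List.mem_cons_self x (le_antisymm (hle f List.mem_cons_self x) ?_)
      exact hnorm.symm.le.trans (norm_foldl_apply_le L hle' (f x))
    rw [hfx] at hnorm
    rw [List.forall_mem_cons]
    exact ⟨hfx, ih hle' (fun g hg => hfix g (List.mem_cons_of_mem f hg)) hnorm⟩

end Foldl

theorem mem_orthogonal_span_iff {E : Type*} [NormedAddCommGroup E] [InnerProductSpace ℝ E]
    {S : Set E} {x : E} :
    x ∈ (Submodule.span ℝ S)ᗮ ↔ ∀ u ∈ S, ⟪x, u⟫ = 0 := by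
  rw [← Submodule.span_singleton_le_iff_mem, ← Submodule.isOrtho_iff_le, Submodule.isOrtho_span]
  simp

section projPerp

variable {E : Type*} [NormedAddCommGroup E] [InnerProductSpace ℝ E] [FiniteDimensional ℝ E]
  {m : ℕ} (v : Fin m → E) (I : Set (Fin m)) (x : E)

theorem projPerp_apply :
    projPerp v I x = (Submodule.span ℝ (v '' I))ᗮ.starProjection x :=
  rfl

theorem norm_projPerp_le : ‖projPerp v I x‖ ≤ ‖x‖ :=
  Submodule.norm_starProjection_apply_le _ x

theorem projPerp_eq_self_iff : projPerp v I x = x ↔ ∀ h ∈ I, ⟪x, v h⟫ = 0 := by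
  rw [projPerp_apply, Submodule.starProjection_eq_self_iff, mem_orthogonal_span_iff,
    Set.forall_mem_image]

theorem projPerp_eq_self_of_norm_eq (h : ‖projPerp v I x‖ = ‖x‖) : projPerp v I x = x :=
  Submodule.starProjection_eq_self_iff.mpr
    ((Submodule.mem_iff_norm_starProjection _ x).mpr h)

end projPerp

theorem eq_of_norm_comp_projPerp_eq_general
    {E : Type*} [NormedAddCommGroup E] [InnerProductSpace ℝ E] [FiniteDimensional ℝ E]
    {m l : ℕ} (v : Fin m → E) (Is : Fin l → Set (Fin m))
    (x : E)
    (hnorm : ‖(List.ofFn fun t => projPerp v (Is t)).foldl (fun y f => f y) x‖ = ‖x‖) :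
    (∀ t : Fin l, ∀ h ∈ Is t, ⟪x, v h⟫ = 0) ∧
      (∀ s : ℕ, s ≤ l →
        ((List.ofFn fun t => projPerp v (Is t)).take s).foldl (fun y f => f y) x = x) := by
  have hfix : ∀ f ∈ List.ofFn fun t => projPerp v (Is t), f x = x :=
    forall_apply_eq_self_of_norm_foldl_apply_eq _
      (List.forall_mem_ofFn_iff.mpr fun t => norm_projPerp_le v (Is t))
      (List.forall_mem_ofFn_iff.mpr fun t => projPerp_eq_self_of_norm_eq v (Is t)) x hnorm
  refine ⟨fun t => (projPerp_eq_self_iff v (Is t) x).mp ?_, fun s _ => ?_⟩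
  · exact List.forall_mem_ofFn_iff.mp hfix t
  · exact foldl_apply_eq_self _ x fun f hf => hfix f (List.mem_of_mem_take hf)

/-- Let `I_1, …, I_l ⊆ {1,…,m}` and `x ∈ Row(A)`. If the composed
projections preserve the norm of `x`, i.e. `‖P_{I_l}(⋯(P_{I_1} x)⋯)‖ = ‖x‖`, then `x`
is orthogonal to `v_h` for every `h ∈ I_1 ∪ ⋯ ∪ I_l`; consequently each partial
composition fixes `x`: `P_{I_s}(⋯(P_{I_1} x)⋯) = x` for every `s ≤ l`. -/
theorem eq_of_norm_comp_projPerp_eq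
    {E : Type*} [NormedAddCommGroup E] [InnerProductSpace ℝ E] [FiniteDimensional ℝ E]
    {m l : ℕ} (v : Fin m → E) (Is : Fin l → Set (Fin m))
    (x : E) (hx : x ∈ Submodule.span ℝ (Set.range v))
    (hnorm : ‖(List.ofFn fun t => projPerp v (Is t)).foldl (fun y f => f y) x‖ = ‖x‖) :
    (∀ t : Fin l, ∀ h ∈ Is t, ⟪x, v h⟫ = 0) ∧
      (∀ s : ℕ, s ≤ l →
        ((List.ofFn fun t => projPerp v (Is t)).take s).foldl (fun y f => f y) x = x) :=
  eq_of_norm_comp_projPerp_eq_general v Is x hnorm
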